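/- Let M be a pseudometric space and let x, y ∈ M. For every e ≥ 0, the constant world lines η(x) and η(y), viewed as functors ℝ ⥤ spacetime(M), are e-interleaved if and only if dist x y ≤ e. Consequently, d_Int(η(x), η(y)) = dist x y; that is, the map η sending a point of M to its constant world line is an isometric embedding of M into the space of functors ℝ ⥤ spacetime(M) with the interleaving distance. -/

import Mathlib

open CategoryTheory CategoryTheory.Limits

noncomputable section

/-- Translation functor `T_e : a ↦ a + e` on `ℝ`, viewed as a preorder category. -/
def Tr (e : ℝ) : ℝ ⥤ ℝ :=
  Monotone.functor (f := fun a : ℝ => a + e) (fun _ _ h => by simpa using h)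

@[simp] theorem Tr_obj (e a : ℝ) : (Tr e).obj a = a + e := rfl

theorem Tr_comp (e f : ℝ) : Tr e ⋙ Tr f = Tr (e + f) :=
  CategoryTheory.Functor.ext (fun a => add_assoc a e f) (fun _ _ _ => Subsingleton.elim _ _)

/-- The canonical natural transformation `U σ_e : U ⟶ U T_e` for `0 ≤ e`,
whose component at `a` is `U` applied to `a ≤ a + e`. -/
def sigmaNat {C : Type*} [Category C] (U : ℝ ⥤ C) (e : ℝ) (he : 0 ≤ e) :
    U ⟶ Tr e ⋙ U where
  app a := U.map (homOfLE (le_add_of_nonneg_right he))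
  naturality a b f := by
    dsimp [Tr]
    rw [← Functor.map_comp, ← Functor.map_comp]
    exact congrArg U.map (Subsingleton.elim _ _)

/-- `(Φ, Ψ)` is an `e`-interleaving of `U` and `V`:
`(Ψ whiskered by T_e) ∘ Φ = U σ_{2e}` and `(Φ whiskered by T_e) ∘ Ψ = V σ_{2e}`
(the `eqToHom` transports along the equality of functors `T_{2e} = T_e ⋙ T_e`). -/
def IsInterleaving {C : Type*} [Category C] (e : ℝ) (he : 0 ≤ e) (U V : ℝ ⥤ C)
    (Φ : U ⟶ Tr e ⋙ V) (Ψ : V ⟶ Tr e ⋙ U) : Prop :=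
  Φ ≫ Functor.whiskerLeft (Tr e) Ψ =
      sigmaNat U (2 * e) (by linarith) ≫ eqToHom (by rw [two_mul, ← Tr_comp, Functor.assoc]) ∧
    Ψ ≫ Functor.whiskerLeft (Tr e) Φ =
      sigmaNat V (2 * e) (by linarith) ≫ eqToHom (by rw [two_mul, ← Tr_comp, Functor.assoc])

/-- `U` and `V` are `e`-interleaved. -/
def Interleaved {C : Type*} [Category C] (e : ℝ) (U V : ℝ ⥤ C) : Prop :=
  ∃ (he : 0 ≤ e) (Φ : U ⟶ Tr e ⋙ V) (Ψ : V ⟶ Tr e ⋙ U), IsInterleaving e he U V Φ Ψ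

/-- The interleaving distance: the infimum in `[0,∞]` of the set of `e ≥ 0` such that
`U` and `V` are `e`-interleaved (`∞` if this set is empty). -/
noncomputable def dInt {C : Type*} [Category C] (U V : ℝ ⥤ C) : ENNReal :=
  sInf (ENNReal.ofReal '' {e : ℝ | Interleaved e U V})

/-- The spacetime of a pseudometric space `M`: the set `M × ℝ` (encoded as a structure
with a point component and a time component). -/
@[ext] structure Spacetime (M : Type*) [PseudoMetricSpace M] where
  pos : M
  time : ℝ

/-- The spacetime preorder: `(x,s) ≤ (y,t)` iff `dist x y ≤ t - s`. -/
instance Spacetime.instPreorder (M : Type*) [PseudoMetricSpace M] :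
    Preorder (Spacetime M) where
  le p q := dist p.pos q.pos ≤ q.time - p.time
  le_refl p := by simp
  le_trans p q r h₁ h₂ := by
    have h := dist_triangle p.pos q.pos r.pos
    change dist p.pos q.pos ≤ q.time - p.time at h₁
    change dist q.pos r.pos ≤ r.time - q.time at h₂
    change dist p.pos r.pos ≤ r.time - p.time
    linarith

theorem Spacetime.le_def {M : Type*} [PseudoMetricSpace M] (p q : Spacetime M) :
    p ≤ q ↔ dist p.pos q.pos ≤ q.time - p.time := Iff.rfl

/-- The constant world line `η(x) : ℝ ⥤ Spacetime M` of a point `x`, i.e. the functor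
induced by the monotone map `s ↦ (x, s)`. -/
def eta {M : Type*} [PseudoMetricSpace M] (x : M) : ℝ ⥤ Spacetime M :=
  Monotone.functor (f := fun s : ℝ => (⟨x, s⟩ : Spacetime M))
    (fun a b h => show dist x x ≤ b - a by rw [dist_self]; linarith)

/-!
Natural transformations between functors into a preorder are pointwise inequalities, and all
parallel morphisms of a thin category agree, so the interleaving equations hold for free: two
functors `ℝ ⥤ P` are `e`-interleaved iff `e ≥ 0` and each lies below the other shifted by `e`.
For constant world lines both inequalities read `dist x y ≤ e`, so the set of interleaving
parameters is `[dist x y, ∞)`, whose infimum is `dist x y`.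
-/

theorem interleaved_iff_of_preorder {P : Type*} [Preorder P] (e : ℝ) (U V : ℝ ⥤ P) :
    Interleaved e U V ↔
      0 ≤ e ∧ (∀ a, U.obj a ≤ V.obj (a + e)) ∧ ∀ a, V.obj a ≤ U.obj (a + e) := by
  constructor
  · rintro ⟨he, Φ, Ψ, -⟩
    exact ⟨he, fun a => leOfHom (Φ.app a), fun a => leOfHom (Ψ.app a)⟩
  · rintro ⟨he, hUV, hVU⟩
    exact ⟨he,
      { app a := homOfLE (hUV a), naturality _ _ _ := Subsingleton.elim _ _ },
      { app a := homOfLE (hVU a), naturality _ _ _ := Subsingleton.elim _ _ },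
      NatTrans.ext (funext fun _ => Subsingleton.elim _ _),
      NatTrans.ext (funext fun _ => Subsingleton.elim _ _)⟩

theorem dInt_eq_ofReal_of_interleaved_iff {C : Type*} [Category C] {U V : ℝ ⥤ C} {r : ℝ}
    (h : ∀ e, Interleaved e U V ↔ r ≤ e) : dInt U V = ENNReal.ofReal r := by
  have hset : {e : ℝ | Interleaved e U V} = Set.Ici r := Set.ext h
  rw [dInt, hset]
  exact (ENNReal.ofReal_mono.map_isLeast isLeast_Ici).csInf_eq

section Spacetime

variable {M : Type*} [PseudoMetricSpace M]

theorem eta_obj_le_eta_obj_iff (x y : M) (a b : ℝ) :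
    (eta x).obj a ≤ (eta y).obj b ↔ dist x y ≤ b - a :=
  Iff.rfl

theorem interleaved_eta_iff (e : ℝ) (x y : M) :
    Interleaved e (eta x) (eta y) ↔ dist x y ≤ e := by
  simp only [interleaved_iff_of_preorder, eta_obj_le_eta_obj_iff, add_sub_cancel_left,
    dist_comm y x, forall_const, and_self]
  exact ⟨And.right, fun h => ⟨dist_nonneg.trans h, h⟩⟩

end Spacetime

/-- For points `x, y` of a pseudometric space `M` and `e ≥ 0`, the constant world lines
`η(x)` and `η(y)` are `e`-interleaved iff `dist x y ≤ e`; consequently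
`dInt (η(x)) (η(y)) = dist x y`, i.e. `η` is an isometric embedding of `M` into the
space of functors `ℝ ⥤ Spacetime M` with the interleaving distance. -/
theorem eta_isometric {M : Type*} [PseudoMetricSpace M] (x y : M) :
    (∀ e : ℝ, 0 ≤ e → (Interleaved e (eta x) (eta y) ↔ dist x y ≤ e)) ∧
      dInt (eta x) (eta y) = ENNReal.ofReal (dist x y) :=
  ⟨fun e _ => interleaved_eta_iff e x y,
    dInt_eq_ofReal_of_interleaved_iff fun e => interleaved_eta_iff e x y⟩

end
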